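/- Under the same hypotheses, with $\rho_m = \inf_j \rho_j$, one has the lower bound $V_{j-1/2} - V_{j+1/2} \geq \gamma_0 (v(\rho_j) - v(\rho_m)) \geq -\gamma_0 \|v'\|_\infty (\rho_j - \rho_m)$ for all $j$. -/

import Mathlib

noncomputable def supAbs (f : ℝ → ℝ) (s : Set ℝ) : ℝ :=
  sSup ((fun x => |f x|) '' s)

/-!
Shifting the index by one turns `V_{j-1/2} - V_{j+1/2}` into `∑ γ_k (w_{j+k} - w_{j+k+1})` with
`w_i = v(ρ_i) - v(ρ_m) ≤ 0` (since `v` is non-increasing). Summation by parts rewrites this as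
`γ_0 w_j + ∑ (γ_{k+1} - γ_k) w_{j+k+1} - γ_{N-1} w_{j+N}`, and every term after the first is
non-negative because `γ` is non-negative and non-increasing. The second bound is the mean value
theorem for `v` on `[ρ_m, ρ_j]`.
-/

open Finset

theorem sub_mul_le_sum_range_mul_sub_succ {γ w : ℕ → ℝ} {n : ℕ}
    (hγ_anti : ∀ k < n, γ (k + 1) ≤ γ k) (hw : ∀ k, w k ≤ 0) :
    γ 0 * w 0 - γ n * w (n + 1) ≤ ∑ k ∈ range (n + 1), γ k * (w k - w (k + 1)) := by
  induction n with
  | zero => simp [mul_sub]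
  | succ n ih =>
    have hstep : 0 ≤ (γ (n + 1) - γ n) * w (n + 1) :=
      mul_nonneg_of_nonpos_of_nonpos (by linarith [hγ_anti n (by omega)]) (hw (n + 1))
    rw [sum_range_succ]
    linarith [ih fun k hk => hγ_anti k (by omega)]

theorem mul_le_sum_range_mul_sub_succ {γ w : ℕ → ℝ} {N : ℕ} (hN : 1 ≤ N)
    (hγ_nonneg : ∀ k < N, 0 ≤ γ k) (hγ_anti : ∀ k, k + 1 < N → γ (k + 1) ≤ γ k)
    (hw : ∀ k, w k ≤ 0) :
    γ 0 * w 0 ≤ ∑ k ∈ range N, γ k * (w k - w (k + 1)) := by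
  obtain ⟨n, rfl⟩ : ∃ n, N = n + 1 := ⟨N - 1, by omega⟩
  have hlast : γ n * w (n + 1) ≤ 0 :=
    mul_nonpos_of_nonneg_of_nonpos (hγ_nonneg n (by omega)) (hw (n + 1))
  linarith [sub_mul_le_sum_range_mul_sub_succ (n := n) (fun k hk => hγ_anti k (by omega)) hw]

theorem abs_le_supAbs {f : ℝ → ℝ} {s : Set ℝ} (hs : IsCompact s) (hf : ContinuousOn f s)
    {x : ℝ} (hx : x ∈ s) : |f x| ≤ supAbs f s :=
  le_csSup (hs.bddAbove_image hf.abs) ⟨x, hx, rfl⟩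

theorem abs_sub_le_supAbs_deriv_mul {f f' : ℝ → ℝ} {s : Set ℝ} (hs : IsCompact s)
    (hs_conv : Convex ℝ s) (hf : ∀ x ∈ s, HasDerivAt f (f' x) x) (hf' : ContinuousOn f' s)
    {x y : ℝ} (hx : x ∈ s) (hy : y ∈ s) : |f y - f x| ≤ supAbs f' s * |y - x| :=
  hs_conv.norm_image_sub_le_of_norm_hasDerivWithin_le (fun z hz => (hf z hz).hasDerivWithinAt)
    (fun _ hz => abs_le_supAbs hs hf' hz) hx hy

theorem convolution_difference_lower_bound_general
    (ρmax : ℝ)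
    (v v' : ℝ → ℝ)
    (hv_deriv : ∀ x ∈ Set.Icc (0:ℝ) ρmax, HasDerivAt v (v' x) x)
    (hv'_cont : ContinuousOn v' (Set.Icc 0 ρmax))
    (hv'_nonpos : ∀ x ∈ Set.Icc (0:ℝ) ρmax, v' x ≤ 0)
    (N : ℕ) (hN : 1 ≤ N) (γ : ℕ → ℝ)
    (hγ_nonneg : ∀ k < N, 0 ≤ γ k)
    (hγ_mono : ∀ k, k + 1 < N → γ (k + 1) ≤ γ k)
    (ρm ρM : ℝ) (hρm : 0 ≤ ρm) (hρM : ρM ≤ ρmax)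
    (ρ : ℤ → ℝ) (hρ : ∀ j, ρ j ∈ Set.Icc ρm ρM)
    (V : ℤ → ℝ)
    (hV : ∀ j, V j = ∑ k ∈ Finset.range N, γ k * v (ρ (j + k + 1))) :
    ∀ j : ℤ, V (j - 1) - V j ≥ γ 0 * (v (ρ j) - v ρm) ∧
      γ 0 * (v (ρ j) - v ρm) ≥
        -(γ 0 * supAbs v' (Set.Icc 0 ρmax) * (ρ j - ρm)) := by
  intro j
  have hρ_mem (i : ℤ) : ρ i ∈ Set.Icc 0 ρmax := ⟨hρm.trans (hρ i).1, (hρ i).2.trans hρM⟩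
  have hρm_mem : ρm ∈ Set.Icc 0 ρmax := ⟨hρm, (hρ 0).1.trans (hρ_mem 0).2⟩
  have hv_anti : AntitoneOn v (Set.Icc 0 ρmax) :=
    antitoneOn_of_hasDerivWithinAt_nonpos (convex_Icc 0 ρmax)
      (fun x hx => (hv_deriv x hx).continuousAt.continuousWithinAt)
      (fun x hx => (hv_deriv x (interior_subset hx)).hasDerivWithinAt)
      (fun x hx => hv'_nonpos x (interior_subset hx))
  set w : ℕ → ℝ := fun k => v (ρ (j + k)) - v ρm
  have hdiff : V (j - 1) - V j = ∑ k ∈ range N, γ k * (w k - w (k + 1)) := by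
    rw [hV, hV, ← sum_sub_distrib]
    refine sum_congr rfl fun k _ => ?_
    rw [show j - 1 + (k : ℤ) + 1 = j + k by ring]
    simp only [w, Nat.cast_succ, ← add_assoc, ← mul_sub, sub_sub_sub_cancel_right]
  have hw (k : ℕ) : w k ≤ 0 :=
    sub_nonpos.2 (hv_anti hρm_mem (hρ_mem _) (hρ _).1)
  have hlip := abs_sub_le_supAbs_deriv_mul isCompact_Icc (convex_Icc 0 ρmax) hv_deriv hv'_cont
    hρm_mem (hρ_mem j)
  have hγ0 : 0 ≤ γ 0 := hγ_nonneg 0 (by omega)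
  constructor
  · rw [hdiff]
    simpa [w] using mul_le_sum_range_mul_sub_succ hN hγ_nonneg hγ_mono hw
  · rw [abs_of_nonneg (sub_nonneg.2 (hρ j).1)] at hlip
    linarith [mul_le_mul_of_nonneg_left (neg_le_of_abs_le hlip) hγ0]

theorem convolution_difference_lower_bound
    (ρmax : ℝ) (hρmax : 0 < ρmax)
    (v v' : ℝ → ℝ)
    (hv_deriv : ∀ x ∈ Set.Icc (0:ℝ) ρmax, HasDerivAt v (v' x) x)
    (hv'_cont : ContinuousOn v' (Set.Icc 0 ρmax))
    (hv_nonneg : ∀ x ∈ Set.Icc (0:ℝ) ρmax, 0 ≤ v x)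
    (hv'_nonpos : ∀ x ∈ Set.Icc (0:ℝ) ρmax, v' x ≤ 0)
    (N : ℕ) (hN : 1 ≤ N) (γ : ℕ → ℝ)
    (hγ_nonneg : ∀ k < N, 0 ≤ γ k)
    (hγ_mono : ∀ k, k + 1 < N → γ (k + 1) ≤ γ k)
    (hγ_sum : ∑ k ∈ Finset.range N, γ k = 1)
    (ρm ρM : ℝ) (hρm : 0 ≤ ρm) (hρM : ρM ≤ ρmax)
    (ρ : ℤ → ℝ) (hρ : ∀ j, ρ j ∈ Set.Icc ρm ρM)
    (V : ℤ → ℝ)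
    (hV : ∀ j, V j = ∑ k ∈ Finset.range N, γ k * v (ρ (j + k + 1))) :
    ∀ j : ℤ, V (j - 1) - V j ≥ γ 0 * (v (ρ j) - v ρm) ∧
      γ 0 * (v (ρ j) - v ρm) ≥
        -(γ 0 * supAbs v' (Set.Icc 0 ρmax) * (ρ j - ρm)) :=
  convolution_difference_lower_bound_general ρmax v v' hv_deriv hv'_cont hv'_nonpos N hN γ hγ_nonneg
    hγ_mono ρm ρM hρm hρM ρ hρ V hV
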